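/- Let s > 11/2. There is a constant C = C(s) > 0 such that for all u, v ∈ H^s(𝕋): |(v ∂_x v − u ∂_x u, u − v)_{H^{s-2}}| ≤ C (‖u‖_{H^s} + ‖v‖_{H^s}) ‖u − v‖²_{H^{s-2}}. -/

import Mathlib

/-!
Put `σ = s - 2`, `w = u - v`, `φ = u + v` and `⟨k⟩ = (1 + k²)^{1/2}`. Then
`v ∂ₓv - u ∂ₓu = -½ ∂ₓ(wφ)`, so the pairing is the double Fourier series
`Σ_{k,j} ⟨k⟩^{2σ} ik ŵ(j) φ̂(k-j) conj ŵ(k)`. As `w` is real, the terms `(k, j)` and `(-j, -k)`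
combine into one carrying the commutator symbol `k⟨k⟩^{2σ} - j⟨j⟩^{2σ}`, which by the mean value
theorem and Peetre's inequality is `≲ ⟨k-j⟩^{σ+1} ⟨k⟩^σ ⟨j⟩^σ`: the derivative falls on `φ`.
Young's inequality `ℓ² × ℓ¹ → ℓ²` bounds the sum by `(Σ_m ⟨m⟩^{σ+1} |φ̂(m)|) ‖w‖²_{H^σ}`, and by
Cauchy–Schwarz `Σ_m ⟨m⟩^{s-1} |φ̂(m)| ≲ ‖φ‖_{H^s} ≤ ‖u‖_{H^s} + ‖v‖_{H^s}`.
-/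
noncomputable section
open scoped BigOperators

/-- A (complex-valued) function on the torus `𝕋 = ℝ/2πℤ`, represented by its sequence of
Fourier coefficients `f̂ : ℤ → ℂ`. -/
abbrev FC := ℤ → ℂ

namespace FC

/-- The Sobolev weight `(1+k²)^s`. -/
def wt (s : ℝ) (k : ℤ) : ℝ := (1 + (k : ℝ) ^ 2) ^ s

/-- `c` represents a function belonging to the Sobolev space `H^s(𝕋)`. -/
def memHs (s : ℝ) (c : FC) : Prop := Summable fun k : ℤ => wt s k * ‖c k‖ ^ 2

/-- The `H^s(𝕋)` norm: `‖f‖²_{H^s} = Σ_{k∈ℤ} (1+k²)^s |f̂(k)|²`. -/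
def hsNorm (s : ℝ) (c : FC) : ℝ := Real.sqrt (∑' k : ℤ, wt s k * ‖c k‖ ^ 2)

/-- The `H^s(𝕋)` inner product `(f,g)_{H^s} = Σ_{k∈ℤ} (1+k²)^s f̂(k) conj(ĝ(k))`
(its real part; the sum is real for real-valued functions). -/
def hsInner (s : ℝ) (c d : FC) : ℝ :=
  (∑' k : ℤ, ((wt s k : ℂ) * (c k * (starRingEnd ℂ) (d k)))).re

/-- `c` represents a real-valued function (conjugate-symmetric coefficients). -/
def isReal (c : FC) : Prop := ∀ k : ℤ, c (-k) = (starRingEnd ℂ) (c k)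

/-- The derivative `∂ₓ`, i.e. the Fourier multiplier `ik`. -/
def D1 (c : FC) : FC := fun k => Complex.I * (k : ℂ) * c k

/-- The pointwise product of functions, i.e. convolution of Fourier coefficients. -/
def mul (c d : FC) : FC := fun k => ∑' j : ℤ, c j * d (k - j)

/-- The represented function, evaluated at `x ∈ ℝ`. -/
def eval (c : FC) (x : ℝ) : ℂ := ∑' k : ℤ, c k * Complex.exp (Complex.I * (k : ℂ) * (x : ℂ))

/-- The `L^∞` norm (supremum of the represented periodic function over ℝ). -/
def linfty (c : FC) : ℝ := ⨆ x : ℝ, ‖eval c x‖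

/-- The `W^{1,∞}` norm. -/
def w1infty (c : FC) : ℝ := linfty c + linfty (D1 c)

/-- A Fourier multiplier operator with real symbol `m`. -/
def mult (m : ℤ → ℝ) (c : FC) : FC := fun k => (m k : ℂ) * c k

/-- The operator `(1-∂ₓ²)⁻¹`, i.e. the Fourier multiplier `(1+k²)⁻¹`. -/
def helmInv : FC → FC := mult fun k => (1 + (k : ℝ) ^ 2)⁻¹

/-- The operator `1-∂ₓ²`, i.e. the Fourier multiplier `1+k²`. -/
def helm : FC → FC := mult fun k => 1 + (k : ℝ) ^ 2

/-- The operator `T̃_ε = (1-ε²∂ₓ²)⁻¹`, i.e. the Fourier multiplier `(1+ε²k²)⁻¹`. -/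
def T (ε : ℝ) : FC → FC := mult fun k => (1 + ε ^ 2 * (k : ℝ) ^ 2)⁻¹

/-- The periodic Hilbert transform, i.e. the Fourier multiplier `-i·sgn(k)`. -/
def hilbert (c : FC) : FC := fun k => -Complex.I * (Int.sign k : ℂ) * c k

/-- The Friedrichs-type mollifier `J_ε`, the Fourier multiplier `ĵ(εk)`. -/
def Jmol (jhat : ℝ → ℝ) (ε : ℝ) : FC → FC := mult fun k => jhat (ε * (k : ℝ))

/-- The generalized Lie derivative `𝓛_ξ f = ξ ∂ₓ f + (∂ₓ ξ) f`. -/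
def lie (ξ c : FC) : FC := mul ξ (D1 c) + mul (D1 ξ) c

/-- `𝓛²_ξ f = 𝓛_ξ (𝓛_ξ f)`. -/
def lie2 (ξ c : FC) : FC := lie ξ (lie ξ c)

/-- The coefficientwise sum `Σ_{k∈ℕ} F k` of a sequence of functions. -/
def tsumFC (F : ℕ → FC) : FC := fun m => ∑' k : ℕ, F k m

/-- The norm on the product space `H^{s₁}×H^{s₂}`. -/
def pairNorm (s₁ s₂ : ℝ) (c d : FC) : ℝ := Real.sqrt (hsNorm s₁ c ^ 2 + hsNorm s₂ d ^ 2)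

/-- The inner product on the product space `H^{s₁}×H^{s₂}`:
`((c₁,d₁),(c₂,d₂)) ↦ (c₁,c₂)_{H^{s₁}} + (d₁,d₂)_{H^{s₂}}`. -/
def pairInner (s₁ s₂ : ℝ) (c₁ d₁ c₂ d₂ : FC) : ℝ := hsInner s₁ c₁ c₂ + hsInner s₂ d₁ d₂

end FC

lemma Real.summable_and_tsum_mul_le_sqrt {ι : Type*} {f g : ι → ℝ} (hf : ∀ i, 0 ≤ f i)
    (hg : ∀ i, 0 ≤ g i) (hf2 : Summable fun i => f i ^ 2) (hg2 : Summable fun i => g i ^ 2) :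
    (Summable fun i => f i * g i) ∧
      ∑' i, f i * g i ≤ √(∑' i, f i ^ 2) * √(∑' i, g i ^ 2) := by
  simpa only [Real.rpow_two, Real.sqrt_eq_rpow] using
    Real.summable_and_inner_le_Lp_mul_Lq_tsum_of_nonneg Real.HolderConjugate.two_two hf hg
      (by simpa only [Real.rpow_two] using hf2) (by simpa only [Real.rpow_two] using hg2)

section Young

variable {G : Type*} [AddCommGroup G]

lemma hasSum_mul_comp_sub_fst {g h : G → ℝ} (hg : Summable g) (hh : Summable h) (hg0 : 0 ≤ g)
    (hh0 : 0 ≤ h) :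
    HasSum (fun p : G × G => g p.1 * h (p.1 - p.2)) ((∑' k, g k) * ∑' m, h m) :=
  (Equiv.prodShear (Equiv.refl G) Equiv.subLeft).hasSum_iff.2
    (hg.hasSum.mul hh.hasSum (hg.mul_of_nonneg hh hg0 hh0))

lemma hasSum_mul_comp_sub_snd {g h : G → ℝ} (hg : Summable g) (hh : Summable h) (hg0 : 0 ≤ g)
    (hh0 : 0 ≤ h) :
    HasSum (fun p : G × G => g p.2 * h (p.1 - p.2)) ((∑' k, g k) * ∑' m, h m) :=
  ((Equiv.prodComm G G).trans (Equiv.prodShear (Equiv.refl G) Equiv.subRight)).hasSum_iff.2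
    (hg.hasSum.mul hh.hasSum (hg.mul_of_nonneg hh hg0 hh0))

variable {x h : G → ℝ}

lemma norm_mul_mul_le_sq_add_sq_mul (hh0 : 0 ≤ h) (p : G × G) :
    ‖x p.1 * x p.2 * h (p.1 - p.2)‖ ≤ (x p.1 ^ 2 + x p.2 ^ 2) / 2 * h (p.1 - p.2) := by
  rw [norm_mul, norm_mul, Real.norm_of_nonneg (hh0 _), Real.norm_eq_abs, Real.norm_eq_abs]
  have := two_mul_le_add_sq |x p.1| |x p.2|
  rw [sq_abs, sq_abs] at this
  exact mul_le_mul_of_nonneg_right (by linarith) (hh0 _)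

lemma hasSum_sq_add_sq_mul_comp_sub (hx : Summable fun k => x k ^ 2) (hh : Summable h)
    (hh0 : 0 ≤ h) :
    HasSum (fun p : G × G => (x p.1 ^ 2 + x p.2 ^ 2) / 2 * h (p.1 - p.2))
      ((∑' m, h m) * ∑' k, x k ^ 2) := by
  have hx0 : (0 : G → ℝ) ≤ fun k => x k ^ 2 := fun k => sq_nonneg _
  have H := ((hasSum_mul_comp_sub_fst hx hh hx0 hh0).add
    (hasSum_mul_comp_sub_snd hx hh hx0 hh0)).div_const 2
  rw [← two_mul, mul_div_cancel_left₀ _ two_ne_zero, mul_comm] at H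
  exact H.congr_fun fun p => by ring

/-- Young's inequality `ℓ² × ℓ¹ → ℓ²` for convolution, in bilinear form. -/
lemma summable_mul_mul_comp_sub (hx : Summable fun k => x k ^ 2) (hh : Summable h)
    (hh0 : 0 ≤ h) : Summable fun p : G × G => x p.1 * x p.2 * h (p.1 - p.2) :=
  (hasSum_sq_add_sq_mul_comp_sub hx hh hh0).summable.of_norm_bounded
    (norm_mul_mul_le_sq_add_sq_mul hh0)

lemma tsum_mul_mul_comp_sub_le (hx : Summable fun k => x k ^ 2) (hh : Summable h)
    (hh0 : 0 ≤ h) :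
    ∑' p : G × G, x p.1 * x p.2 * h (p.1 - p.2) ≤ (∑' m, h m) * ∑' k, x k ^ 2 :=
  ((summable_mul_mul_comp_sub hx hh hh0).tsum_le_tsum
    (fun p => (Real.le_norm_self _).trans (norm_mul_mul_le_sq_add_sq_mul hh0 p))
    (hasSum_sq_add_sq_mul_comp_sub hx hh hh0).summable).trans_eq
    (hasSum_sq_add_sq_mul_comp_sub hx hh hh0).tsum_eq

end Young

namespace FC

lemma one_add_sq_le_two_mul (x y : ℝ) : 1 + y ^ 2 ≤ 2 * ((1 + x ^ 2) * (1 + (y - x) ^ 2)) := by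
  nlinarith [sq_nonneg (y - 2 * x), sq_nonneg (x * (y - x)), sq_nonneg (y - x), sq_nonneg x]

lemma wt_pos (a : ℝ) (k : ℤ) : 0 < wt a k := by unfold wt; positivity

lemma wt_mono {a b : ℝ} (h : a ≤ b) (k : ℤ) : wt a k ≤ wt b k :=
  Real.rpow_le_rpow_of_exponent_le (by nlinarith) h

lemma wt_mul_wt (a b : ℝ) (k : ℤ) : wt a k * wt b k = wt (a + b) k :=
  (Real.rpow_add (by positivity) a b).symm

lemma wt_neg (a : ℝ) (k : ℤ) : wt a (-k) = wt a k := by simp [wt]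

lemma wt_zero_left (k : ℤ) : wt 0 k = 1 := Real.rpow_zero _

lemma abs_le_wt_half (k : ℤ) : |(k : ℝ)| ≤ wt (1 / 2) k := by
  rw [wt, ← Real.sqrt_eq_rpow, ← Real.sqrt_sq_eq_abs]
  exact Real.sqrt_le_sqrt (by linarith)

/-- Peetre's inequality. -/
lemma wt_le_two_rpow_mul {a : ℝ} (ha : 0 ≤ a) (k j : ℤ) :
    wt a k ≤ 2 ^ a * (wt a j * wt a (k - j)) := by
  calc wt a k ≤ (2 * ((1 + (j : ℝ) ^ 2) * (1 + ((k - j : ℤ) : ℝ) ^ 2))) ^ a := by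
        push_cast
        exact Real.rpow_le_rpow (by positivity) (one_add_sq_le_two_mul _ _) ha
    _ = 2 ^ a * (wt a j * wt a (k - j)) := by
        rw [Real.mul_rpow (by norm_num) (by positivity),
          Real.mul_rpow (by positivity) (by positivity)]
        rfl

lemma summable_wt {a : ℝ} (ha : a < -1 / 2) : Summable (wt a) := by
  refine ((Real.summable_abs_int_rpow (b := -(2 * a)) (by linarith)).add
    (hasSum_ite_eq (0 : ℤ) (1 : ℝ)).summable).of_nonneg_of_le (fun k => (wt_pos a k).le)
    fun k => ?_
  rcases eq_or_ne k 0 with rfl | hk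
  · simpa [wt] using Real.rpow_nonneg le_rfl (2 * a)
  · have hk' : (0 : ℝ) < |(k : ℝ)| := by positivity
    calc wt a k ≤ (|(k : ℝ)| ^ 2) ^ a :=
          Real.rpow_le_rpow_of_nonpos (by positivity) (by simp) (by linarith)
      _ = |(k : ℝ)| ^ (-(-(2 * a))) := by
          rw [neg_neg, ← Real.rpow_natCast, ← Real.rpow_mul hk'.le]; norm_num
      _ ≤ _ := by simp [hk]

lemma wt_sq (a : ℝ) (k : ℤ) : wt a k ^ 2 = wt (2 * a) k := by
  rw [sq, wt_mul_wt, two_mul]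

lemma hsNorm_sq (s : ℝ) (c : FC) : hsNorm s c ^ 2 = ∑' k, wt s k * ‖c k‖ ^ 2 :=
  Real.sq_sqrt (tsum_nonneg fun k => by have := wt_pos s k; positivity)

lemma memHs.of_le {s a : ℝ} {c : FC} (hc : memHs s c) (h : a ≤ s) : memHs a c :=
  hc.of_nonneg_of_le (fun k => by have := wt_pos a k; positivity)
    fun k => mul_le_mul_of_nonneg_right (wt_mono h k) (sq_nonneg _)

lemma memHs.sub {s : ℝ} {c d : FC} (hc : memHs s c) (hd : memHs s d) : memHs s (c - d) := by
  refine ((hc.add hd).mul_left 2).of_nonneg_of_le (fun k => by have := wt_pos s k; positivity)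
    fun k => ?_
  have h : ‖c k - d k‖ ^ 2 ≤ 2 * (‖c k‖ ^ 2 + ‖d k‖ ^ 2) := by
    nlinarith [norm_sub_le (c k) (d k), norm_nonneg (c k - d k), sq_nonneg (‖c k‖ - ‖d k‖)]
  calc wt s k * ‖c k - d k‖ ^ 2 ≤ wt s k * (2 * (‖c k‖ ^ 2 + ‖d k‖ ^ 2)) :=
        mul_le_mul_of_nonneg_left h (wt_pos s k).le
    _ = 2 * (wt s k * ‖c k‖ ^ 2 + wt s k * ‖d k‖ ^ 2) := by ring

lemma isReal.sub {c d : FC} (hc : isReal c) (hd : isReal d) : isReal (c - d) := fun k => by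
  simp only [Pi.sub_apply, hc k, hd k, map_sub]

lemma summable_and_tsum_wt_mul_norm_le {s a : ℝ} {c : FC} (hc : memHs s c)
    (ha : Summable (wt (2 * a - s))) :
    (Summable fun k => wt a k * ‖c k‖) ∧
      ∑' k, wt a k * ‖c k‖ ≤ √(∑' k, wt (2 * a - s) k) * hsNorm s c := by
  have hf2 (k : ℤ) : wt (a - s / 2) k ^ 2 = wt (2 * a - s) k := by
    rw [wt_sq]; ring_nf
  have hg2 (k : ℤ) : (wt (s / 2) k * ‖c k‖) ^ 2 = wt s k * ‖c k‖ ^ 2 := by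
    rw [mul_pow, wt_sq]; ring_nf
  have hfg (k : ℤ) : wt (a - s / 2) k * (wt (s / 2) k * ‖c k‖) = wt a k * ‖c k‖ := by
    rw [← mul_assoc, wt_mul_wt]; ring_nf
  have key := Real.summable_and_tsum_mul_le_sqrt (g := fun k => wt (s / 2) k * ‖c k‖)
    (fun k => (wt_pos (a - s / 2) k).le) (fun k => by have := wt_pos (s / 2) k; positivity)
    (by simpa only [hf2] using ha) (Summable.congr hc fun k => (hg2 k).symm)
  simpa only [hf2, hg2, hfg, hsNorm] using key

lemma summable_and_tsum_wt_mul_norm_add_le {s a : ℝ} {c d : FC} (hc : memHs s c)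
    (hd : memHs s d) (ha : Summable (wt (2 * a - s))) :
    (Summable fun k => wt a k * ‖(c + d) k‖) ∧
      ∑' k, wt a k * ‖(c + d) k‖ ≤ √(∑' k, wt (2 * a - s) k) * (hsNorm s c + hsNorm s d) := by
  obtain ⟨hc1, hc2⟩ := summable_and_tsum_wt_mul_norm_le hc ha
  obtain ⟨hd1, hd2⟩ := summable_and_tsum_wt_mul_norm_le hd ha
  have hle (k : ℤ) : wt a k * ‖(c + d) k‖ ≤ wt a k * ‖c k‖ + wt a k * ‖d k‖ := by
    rw [← mul_add]; exact mul_le_mul_of_nonneg_left (norm_add_le _ _) (wt_pos a k).le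
  have hsum : Summable fun k => wt a k * ‖(c + d) k‖ :=
    (hc1.add hd1).of_nonneg_of_le (fun k => by have := wt_pos a k; positivity) hle
  refine ⟨hsum, (hsum.tsum_le_tsum hle (hc1.add hd1)).trans ?_⟩
  rw [hc1.tsum_add hd1, mul_add]
  exact add_le_add hc2 hd2

lemma summable_norm_of_memHs {s : ℝ} {c : FC} (hc : memHs s c) (hs : 1 < s) :
    Summable fun k => ‖c k‖ := by
  simpa only [wt_zero_left, one_mul] using
    (summable_and_tsum_wt_mul_norm_le (a := 0) hc (summable_wt (by linarith))).1

lemma summable_norm_D1_of_memHs {s : ℝ} {c : FC} (hc : memHs s c) (hs : 2 < s) :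
    Summable fun k => ‖D1 c k‖ := by
  refine (summable_and_tsum_wt_mul_norm_le (a := 1 / 2) hc (summable_wt (by linarith))).1
    |>.of_nonneg_of_le (fun k => norm_nonneg _) fun k => ?_
  rw [D1, norm_mul, norm_mul, Complex.norm_I, one_mul, Complex.norm_intCast]
  exact mul_le_mul_of_nonneg_right (abs_le_wt_half k) (norm_nonneg _)

lemma summable_mul_apply_sub {c d : FC} (hc : Summable fun k => ‖c k‖)
    (hd : Summable fun k => ‖d k‖) (k : ℤ) : Summable fun j => c j * d (k - j) :=
  (summable_mul_of_summable_norm hc hd).comp_injective (i := fun j => (j, k - j))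
    fun _ _ h => (Prod.mk.inj h).1

lemma mul_comm (c d : FC) : mul c d = mul d c := by
  ext k
  rw [mul, mul, ← (Equiv.subLeft k).tsum_eq]
  simp [_root_.mul_comm]

lemma mul_sub_add {u v : FC} (hu : Summable fun k => ‖u k‖) (hv : Summable fun k => ‖v k‖) :
    mul (u - v) (u + v) = mul u u - mul v v := by
  ext k
  have hcross : ∑' j, (u j * v (k - j) - v j * u (k - j)) = 0 := by
    rw [(summable_mul_apply_sub hu hv k).tsum_sub (summable_mul_apply_sub hv hu k)]
    exact sub_eq_zero.2 (congrFun (mul_comm u v) k)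
  calc mul (u - v) (u + v) k
      = ∑' j, ((u j * u (k - j) - v j * v (k - j)) + (u j * v (k - j) - v j * u (k - j))) := by
        simp only [mul, Pi.sub_apply, Pi.add_apply]; congr 1; ext j; ring
    _ = (mul u u - mul v v) k := by
        rw [((summable_mul_apply_sub hu hu k).sub (summable_mul_apply_sub hv hv k)).tsum_add
          ((summable_mul_apply_sub hu hv k).sub (summable_mul_apply_sub hv hu k)), hcross,
          add_zero, (summable_mul_apply_sub hu hu k).tsum_sub (summable_mul_apply_sub hv hv k)]
        rfl

/-- The terms `j` and `k - j` of the convolution pair up. -/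
lemma mul_D1_self {c : FC} (hc : Summable fun k => ‖c k‖) (hc' : Summable fun k => ‖D1 c k‖) :
    mul c (D1 c) = (1 / 2 : ℂ) • D1 (mul c c) := by
  ext k
  set f : ℤ → ℂ := fun j => c j * D1 c (k - j)
  have hf : Summable f := summable_mul_apply_sub hc hc' k
  have hf' : Summable fun j => f (k - j) := (Equiv.subLeft k).summable_iff.2 hf
  have hrev : ∑' j, f (k - j) = ∑' j, f j := (Equiv.subLeft k).tsum_eq f
  have hpair (j : ℤ) : f j + f (k - j) = Complex.I * k * (c j * c (k - j)) := by
    simp only [f, D1, sub_sub_cancel]; push_cast; ring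
  have htwice : 2 * ∑' j, f j = D1 (mul c c) k := by
    rw [two_mul]
    nth_rewrite 2 [← hrev]
    rw [← hf.tsum_add hf', D1, mul, ← tsum_mul_left]
    exact tsum_congr hpair
  change ∑' j, f j = _
  rw [Pi.smul_apply, smul_eq_mul, ← htwice]
  ring

lemma mul_D1_sub_mul_D1 {u v : FC} (hu : Summable fun k => ‖u k‖)
    (hu' : Summable fun k => ‖D1 u k‖) (hv : Summable fun k => ‖v k‖)
    (hv' : Summable fun k => ‖D1 v k‖) :
    mul v (D1 v) - mul u (D1 u) = ((-1 / 2 : ℝ) : ℂ) • D1 (mul (u - v) (u + v)) := by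
  rw [mul_D1_self hu hu', mul_D1_self hv hv', mul_sub_add hu hv]
  ext k
  simp only [D1, Pi.sub_apply, Pi.smul_apply, smul_eq_mul]
  push_cast
  ring

lemma hsInner_ofReal_smul_left (σ r : ℝ) (c d : FC) :
    hsInner σ ((r : ℂ) • c) d = r * hsInner σ c d := by
  simp only [hsInner, Pi.smul_apply, smul_eq_mul]
  rw [← Complex.re_ofReal_mul, ← tsum_mul_left]
  congr 1
  exact tsum_congr fun k => by ring

lemma one_add_sq_sq_le_of_mem_uIcc {t x y : ℝ} (ht : t ∈ Set.uIcc x y) :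
    (1 + t ^ 2) ^ 2 ≤ 2 * (1 + x ^ 2) * (1 + y ^ 2) * (1 + (x - y) ^ 2) := by
  have hxy := one_add_sq_le_two_mul y x
  have hyx := one_add_sq_le_two_mul x y
  have ht' : t ^ 2 ≤ x ^ 2 ∨ t ^ 2 ≤ y ^ 2 := by
    rcases Set.mem_uIcc.1 ht with ⟨h1, h2⟩ | ⟨h1, h2⟩ <;> rcases le_total 0 t with h | h
    exacts [Or.inr (by nlinarith), Or.inl (by nlinarith), Or.inl (by nlinarith),
      Or.inr (by nlinarith)]
  rcases ht' with h | h
  · calc (1 + t ^ 2) ^ 2 ≤ (1 + x ^ 2) * (1 + x ^ 2) := by nlinarith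
      _ ≤ _ := by nlinarith
  · calc (1 + t ^ 2) ^ 2 ≤ (1 + y ^ 2) * (1 + y ^ 2) := by nlinarith
      _ ≤ _ := by nlinarith

lemma hasDerivAt_mul_one_add_sq_rpow (σ t : ℝ) :
    HasDerivAt (fun t : ℝ => t * (1 + t ^ 2) ^ σ)
      ((1 + t ^ 2) ^ σ + 2 * σ * (t ^ 2 * (1 + t ^ 2) ^ (σ - 1))) t := by
  refine ((hasDerivAt_id' t).fun_mul
    (((hasDerivAt_pow 2 t).const_add 1).rpow_const (p := σ) (Or.inl (by positivity))))
    |>.congr_deriv ?_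
  norm_num
  ring

lemma abs_deriv_mul_one_add_sq_rpow_le {σ : ℝ} (hσ : 0 ≤ σ) (t : ℝ) :
    |(1 + t ^ 2) ^ σ + 2 * σ * (t ^ 2 * (1 + t ^ 2) ^ (σ - 1))| ≤
      (1 + 2 * σ) * (1 + t ^ 2) ^ σ := by
  have hpos : (0 : ℝ) < 1 + t ^ 2 := by positivity
  have h1 : t ^ 2 * (1 + t ^ 2) ^ (σ - 1) ≤ (1 + t ^ 2) ^ σ := by
    have hσ1 := Real.rpow_add_one hpos.ne' (σ - 1)
    rw [sub_add_cancel] at hσ1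
    rw [hσ1, _root_.mul_comm _ (1 + t ^ 2)]
    exact mul_le_mul_of_nonneg_right (by linarith) (by positivity)
  rw [abs_of_nonneg (by positivity)]
  nlinarith

/-- The symbol `ξ ↦ ξ⟨ξ⟩^{2σ}` of `∂ₓ(1-∂ₓ²)^σ` is Lipschitz with a locally controlled constant,
by the mean value theorem. -/
lemma abs_mul_one_add_sq_rpow_sub_le {σ : ℝ} (hσ : 0 ≤ σ) (x y : ℝ) :
    |x * (1 + x ^ 2) ^ σ - y * (1 + y ^ 2) ^ σ| ≤
      (1 + 2 * σ) * (2 * (1 + x ^ 2) * (1 + y ^ 2) * (1 + (x - y) ^ 2)) ^ (σ / 2) * |x - y| := by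
  refine (convex_uIcc y x).norm_image_sub_le_of_norm_hasDerivWithin_le
    (fun t _ => (hasDerivAt_mul_one_add_sq_rpow σ t).hasDerivWithinAt) (fun t ht => ?_)
    Set.left_mem_uIcc Set.right_mem_uIcc
  refine (abs_deriv_mul_one_add_sq_rpow_le hσ t).trans (mul_le_mul_of_nonneg_left ?_ (by linarith))
  calc (1 + t ^ 2) ^ σ = ((1 + t ^ 2) ^ 2) ^ (σ / 2) := by
        rw [← Real.rpow_natCast_mul (by positivity)]; ring_nf
    _ ≤ _ := Real.rpow_le_rpow (by positivity)
        (one_add_sq_sq_le_of_mem_uIcc (Set.uIcc_comm x y ▸ ht)) (by linarith)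

lemma abs_mul_wt_sub_le {σ : ℝ} (hσ : 0 ≤ σ) (k j : ℤ) :
    |(k : ℝ) * wt σ k - j * wt σ j| ≤
      (1 + 2 * σ) * 2 ^ (σ / 2) * (wt ((σ + 1) / 2) (k - j) * (wt (σ / 2) k * wt (σ / 2) j)) := by
  have h := abs_mul_one_add_sq_rpow_sub_le hσ k j
  rw [Real.mul_rpow (by positivity) (by positivity), Real.mul_rpow (by positivity) (by positivity),
    Real.mul_rpow (by positivity) (by positivity)] at h
  have hkj : |(k : ℝ) - j| ≤ (1 + ((k : ℝ) - j) ^ 2) ^ (1 / 2 : ℝ) := by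
    simpa [wt] using abs_le_wt_half (k - j)
  calc _ ≤ _ := h
    _ ≤ (1 + 2 * σ) * (2 ^ (σ / 2) * wt (σ / 2) k * wt (σ / 2) j * wt (σ / 2) (k - j)) *
          wt (1 / 2) (k - j) := by
        simp only [wt]; push_cast
        gcongr
    _ = _ := by
        rw [show (σ + 1) / 2 = σ / 2 + 1 / 2 by ring, ← wt_mul_wt]; ring

def hsInnerD1MulTerm (σ : ℝ) (w φ : FC) (p : ℤ × ℤ) : ℂ :=
  (wt σ p.1 : ℂ) * (Complex.I * p.1 * (w p.2 * φ (p.1 - p.2)) * starRingEnd ℂ (w p.1))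

variable {σ : ℝ} {w φ : FC}

lemma norm_hsInnerD1MulTerm (k j : ℤ) :
    ‖hsInnerD1MulTerm σ w φ (k, j)‖ = |(k : ℝ)| * wt σ k * (‖w k‖ * ‖w j‖ * ‖φ (k - j)‖) := by
  simp only [hsInnerD1MulTerm, norm_mul, Complex.norm_real, Complex.norm_I, Complex.norm_intCast,
    RCLike.norm_conj, Real.norm_of_nonneg (wt_pos σ k).le]
  ring

lemma summable_hsInnerD1MulTerm (hσ : 0 ≤ σ) (hw : memHs (σ + 1 / 2) w)
    (hφ : Summable fun m => wt (σ / 2 + 1 / 4) m * ‖φ m‖) :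
    Summable (hsInnerD1MulTerm σ w φ) := by
  set τ := σ / 2 + 1 / 4 with hτ
  set y : ℤ → ℝ := fun k => wt τ k * ‖w k‖
  have hy : Summable fun k => y k ^ 2 :=
    Summable.congr hw fun k => by rw [mul_pow, wt_sq, hτ]; ring_nf
  have hh : Summable fun m => 2 ^ τ * (wt τ m * ‖φ m‖) := hφ.mul_left _
  refine (summable_mul_mul_comp_sub hy hh fun m => by have := wt_pos τ m; positivity)
    |>.of_norm_bounded fun ⟨k, j⟩ => ?_
  have hk : |(k : ℝ)| * wt σ k ≤ wt τ k * wt τ k :=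
    calc |(k : ℝ)| * wt σ k ≤ wt (1 / 2) k * wt σ k :=
          mul_le_mul_of_nonneg_right (abs_le_wt_half k) (wt_pos σ k).le
      _ = wt τ k * wt τ k := by rw [wt_mul_wt, wt_mul_wt, hτ]; ring_nf
  have hpeetre := wt_le_two_rpow_mul (show 0 ≤ τ by positivity) k j
  have hτk := wt_pos τ k
  rw [norm_hsInnerD1MulTerm]
  calc |(k : ℝ)| * wt σ k * (‖w k‖ * ‖w j‖ * ‖φ (k - j)‖)
      ≤ wt τ k * (2 ^ τ * (wt τ j * wt τ (k - j))) * (‖w k‖ * ‖w j‖ * ‖φ (k - j)‖) :=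
        mul_le_mul_of_nonneg_right (hk.trans (mul_le_mul_of_nonneg_left hpeetre hτk.le))
          (by positivity)
    _ = y k * y j * (2 ^ τ * (wt τ (k - j) * ‖φ (k - j)‖)) := by ring

lemma hsInner_D1_mul_eq_tsum (hT : Summable (hsInnerD1MulTerm σ w φ)) :
    hsInner σ (D1 (mul w φ)) w = (∑' p, hsInnerD1MulTerm σ w φ p).re := by
  rw [hsInner, hT.tsum_prod]
  congr 1
  refine tsum_congr fun k => ?_
  simp only [hsInnerD1MulTerm, D1, mul]
  rw [← tsum_mul_left, ← tsum_mul_right, ← tsum_mul_left]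

/-- Pairing the term `(k, j)` with `(-j, -k)` replaces `k⟨k⟩^{2σ}` by the commutator symbol
`k⟨k⟩^{2σ} - j⟨j⟩^{2σ}`; this is where `w` being real-valued enters. -/
lemma hsInnerD1MulTerm_add_neg_swap (hw : isReal w) (k j : ℤ) :
    hsInnerD1MulTerm σ w φ (k, j) + hsInnerD1MulTerm σ w φ (-j, -k) =
      Complex.I * (((k : ℝ) * wt σ k - j * wt σ j : ℝ) : ℂ) *
        (w j * φ (k - j) * starRingEnd ℂ (w k)) := by
  simp only [hsInnerD1MulTerm, wt_neg, hw k, hw j, Complex.conj_conj,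
    show -j - -k = k - j by ring]
  push_cast
  ring

lemma norm_hsInnerD1MulTerm_add_neg_swap_le (hσ : 0 ≤ σ) (hw : isReal w) (k j : ℤ) :
    ‖hsInnerD1MulTerm σ w φ (k, j) + hsInnerD1MulTerm σ w φ (-j, -k)‖ ≤
      (1 + 2 * σ) * 2 ^ (σ / 2) * (wt (σ / 2) k * ‖w k‖ * (wt (σ / 2) j * ‖w j‖) *
        (wt ((σ + 1) / 2) (k - j) * ‖φ (k - j)‖)) := by
  rw [hsInnerD1MulTerm_add_neg_swap hw, norm_mul, norm_mul, Complex.norm_I, one_mul,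
    Complex.norm_real, Real.norm_eq_abs, norm_mul, norm_mul, RCLike.norm_conj]
  calc |(k : ℝ) * wt σ k - j * wt σ j| * (‖w j‖ * ‖φ (k - j)‖ * ‖w k‖)
      ≤ (1 + 2 * σ) * 2 ^ (σ / 2) * (wt ((σ + 1) / 2) (k - j) * (wt (σ / 2) k * wt (σ / 2) j)) *
          (‖w j‖ * ‖φ (k - j)‖ * ‖w k‖) := by
        gcongr
        exact abs_mul_wt_sub_le hσ k j
    _ = _ := by ring

/-- A Kato–Ponce type commutator estimate. -/
theorem abs_hsInner_D1_mul_le (hσ : 0 ≤ σ) (hw : memHs (σ + 1 / 2) w) (hw_real : isReal w)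
    (hφ : Summable fun m => wt ((σ + 1) / 2) m * ‖φ m‖) :
    |hsInner σ (D1 (mul w φ)) w| ≤
      (1 + 2 * σ) * 2 ^ (σ / 2) / 2 * (∑' m, wt ((σ + 1) / 2) m * ‖φ m‖) * hsNorm σ w ^ 2 := by
  set T := hsInnerD1MulTerm σ w φ
  set C := (1 + 2 * σ) * 2 ^ (σ / 2)
  set x : ℤ → ℝ := fun k => wt (σ / 2) k * ‖w k‖
  set h : ℤ → ℝ := fun m => wt ((σ + 1) / 2) m * ‖φ m‖
  have hx2 (k : ℤ) : x k ^ 2 = wt σ k * ‖w k‖ ^ 2 := by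
    simp only [x, mul_pow, wt_sq]; ring_nf
  have hx : Summable fun k => x k ^ 2 :=
    Summable.congr (hw.of_le (by linarith)) fun k => (hx2 k).symm
  have hh0 : 0 ≤ h := fun m => by have := wt_pos ((σ + 1) / 2) m; positivity
  have hT : Summable T := summable_hsInnerD1MulTerm hσ hw
    (hφ.of_nonneg_of_le (fun m => by have := wt_pos (σ / 2 + 1 / 4) m; positivity)
      fun m => mul_le_mul_of_nonneg_right (wt_mono (by linarith) m) (norm_nonneg _))
  let e : ℤ × ℤ ≃ ℤ × ℤ := (Equiv.prodComm ℤ ℤ).trans ((Equiv.neg ℤ).prodCongr (Equiv.neg ℤ))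
  have hsym : 2 * ∑' p, T p = ∑' p, (T p + T (e p)) := by
    have hTe : Summable fun p => T (e p) := e.summable_iff.2 hT
    rw [hT.tsum_add hTe, e.tsum_eq T, two_mul]
  have hbound (p : ℤ × ℤ) : ‖T p + T (e p)‖ ≤ C * (x p.1 * x p.2 * h (p.1 - p.2)) :=
    norm_hsInnerD1MulTerm_add_neg_swap_le hσ hw_real p.1 p.2
  have hB := (summable_mul_mul_comp_sub hx hφ hh0).mul_left C
  have hnorm : Summable fun p => ‖T p + T (e p)‖ :=
    hB.of_nonneg_of_le (fun _ => norm_nonneg _) hbound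
  calc |hsInner σ (D1 (mul w φ)) w| = |(∑' p, T p).re| := by rw [hsInner_D1_mul_eq_tsum hT]
    _ ≤ ‖∑' p, T p‖ := Complex.abs_re_le_norm _
    _ = ‖∑' p, (T p + T (e p))‖ / 2 := by rw [← hsym, norm_mul, Complex.norm_ofNat]; ring
    _ ≤ (∑' p : ℤ × ℤ, C * (x p.1 * x p.2 * h (p.1 - p.2))) / 2 := by
        gcongr
        exact (norm_tsum_le_tsum_norm hnorm).trans (hnorm.tsum_le_tsum hbound hB)
    _ ≤ C * ((∑' m, h m) * ∑' k, x k ^ 2) / 2 := by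
        rw [tsum_mul_left]
        gcongr
        exact tsum_mul_mul_comp_sub_le hx hφ hh0
    _ = C / 2 * (∑' m, h m) * hsNorm σ w ^ 2 := by
        rw [hsNorm_sq, tsum_congr hx2]; ring

end FC

/-- Let `s > 11/2`.  There is `C = C(s) > 0` such that for all
`u, v ∈ H^s(𝕋)`:
`|(v ∂ₓv − u ∂ₓu, u − v)_{H^{s-2}}| ≤ C (‖u‖_{H^s} + ‖v‖_{H^s}) ‖u − v‖²_{H^{s-2}}`. -/
theorem statement9 (s : ℝ) (hs : 11 / 2 < s) :
    ∃ C > (0 : ℝ), ∀ u v : FC,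
      FC.memHs s u → FC.memHs s v → FC.isReal u → FC.isReal v →
      |FC.hsInner (s - 2) (FC.mul v (FC.D1 v) - FC.mul u (FC.D1 u)) (u - v)|
        ≤ C * (FC.hsNorm s u + FC.hsNorm s v) * FC.hsNorm (s - 2) (u - v) ^ 2 := by
  have hexp : 2 * ((s - 2 + 1) / 2) - s = -1 := by ring
  have hK : 0 < (1 + 2 * (s - 2)) * 2 ^ ((s - 2) / 2) := by
    have : 0 < 1 + 2 * (s - 2) := by linarith
    positivity
  have hZ : 0 < ∑' k, FC.wt (-1) k :=
    (FC.summable_wt (by norm_num)).tsum_pos (fun k => (FC.wt_pos _ k).le) 0 (FC.wt_pos _ 0)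
  refine ⟨(1 + 2 * (s - 2)) * 2 ^ ((s - 2) / 2) / 4 * √(∑' k, FC.wt (-1) k),
    mul_pos (by positivity) (Real.sqrt_pos.2 hZ), ?_⟩
  intro u v hu hv hu_real hv_real
  have hφ := FC.summable_and_tsum_wt_mul_norm_add_le (a := (s - 2 + 1) / 2) hu hv
    (by rw [hexp]; exact FC.summable_wt (by norm_num))
  rw [hexp] at hφ
  have hcomm := FC.abs_hsInner_D1_mul_le (by linarith) ((hu.sub hv).of_le (by linarith))
    (hu_real.sub hv_real) hφ.1
  calc |FC.hsInner (s - 2) (FC.mul v (FC.D1 v) - FC.mul u (FC.D1 u)) (u - v)|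
      = 1 / 2 * |FC.hsInner (s - 2) (FC.D1 (FC.mul (u - v) (u + v))) (u - v)| := by
        rw [FC.mul_D1_sub_mul_D1 (FC.summable_norm_of_memHs hu (by linarith))
          (FC.summable_norm_D1_of_memHs hu (by linarith))
          (FC.summable_norm_of_memHs hv (by linarith))
          (FC.summable_norm_D1_of_memHs hv (by linarith)), FC.hsInner_ofReal_smul_left, abs_mul]
        norm_num
    _ ≤ 1 / 2 * ((1 + 2 * (s - 2)) * 2 ^ ((s - 2) / 2) / 2 *
          (√(∑' k, FC.wt (-1) k) * (FC.hsNorm s u + FC.hsNorm s v)) *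
          FC.hsNorm (s - 2) (u - v) ^ 2) := by
        gcongr
        exact hcomm.trans (mul_le_mul_of_nonneg_right
          (mul_le_mul_of_nonneg_left hφ.2 (by positivity)) (by positivity))
    _ = _ := by ring
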